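/- For a chain π ∈ S_n, the generating function of the left-enriched order polynomial satisfies Σ_{m≥0} op_π(m) t^m = (4t)^{lpk(π)}·(1+t)^{n-2lpk(π)}/(1-t)^{n+1}, where op_π(m) = 4^{lpk(π)}·Σ_{a≥0} C(n+m-a, n)·C(n-2lpk(π), a-lpk(π)). -/

import Mathlib

/-- The value of the permutation at position `j` (1-indexed), shifted by 1,
with the convention that out-of-range positions (in particular `j = 0`) give `0`. -/
def pval {n : ℕ} (π : Equiv.Perm (Fin n)) (j : ℕ) : ℕ :=
  if h : 1 ≤ j ∧ j ≤ n then ((π ⟨j - 1, by omega⟩ : Fin n) : ℕ) + 1 else 0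

/-- Number of descents of `π`: indices `i ∈ {1,…,n-1}` with `π(i) > π(i+1)`. -/
def des {n : ℕ} (π : Equiv.Perm (Fin n)) : ℕ :=
  ((Finset.Icc 1 (n - 1)).filter (fun i => pval π (i + 1) < pval π i)).card

/-- Number of left peaks of `π`: indices `i ∈ {1,…,n-1}` with
`π(i-1) < π(i) > π(i+1)`, with the convention `π(0) = 0`. -/
def lpk {n : ℕ} (π : Equiv.Perm (Fin n)) : ℕ :=
  ((Finset.Icc 1 (n - 1)).filter
    (fun i => pval π (i - 1) < pval π i ∧ pval π (i + 1) < pval π i)).card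

/-- Number of interior peaks of `π`: indices `i ∈ {2,…,n-1}` with
`π(i-1) < π(i) > π(i+1)`. -/
def pk {n : ℕ} (π : Equiv.Perm (Fin n)) : ℕ :=
  ((Finset.Icc 2 (n - 1)).filter
    (fun i => pval π (i - 1) < pval π i ∧ pval π (i + 1) < pval π i)).card

/-- Binomial coefficient for integer arguments, with the convention that it is
zero when `b < 0` or `a < b`. -/
def zchoose (a b : ℤ) : ℤ :=
  if 0 ≤ b ∧ b ≤ a then ((a.toNat).choose b.toNat : ℤ) else 0

/-- The left-enriched order polynomial of a chain on `n` elements with `k` left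
peaks, evaluated at `m`:  `4^k · Σ_{a≥0} C(n+m-a, n)·C(n-2k, a-k)`
(reindexed by `a = k + b`; terms with `b > n` vanish). -/
def opL (n k m : ℕ) : ℤ :=
  4 ^ k * ∑ b ∈ Finset.range (n + 1),
    zchoose ((n : ℤ) + m - (k + b)) n * zchoose ((n : ℤ) - 2 * k) b

/-- The enriched order polynomial of a chain on `n` elements with `k` peaks,
evaluated at `m`: `2·4^k · Σ_{a≥0} C(n-1+m-a, n)·C(n-1-2k, a-k)`
(reindexed by `a = k + b`; terms with `b > n` vanish). -/
def opStar (n k m : ℕ) : ℤ :=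
  2 * 4 ^ k * ∑ b ∈ Finset.range (n + 1),
    zchoose ((n : ℤ) - 1 + m - (k + b)) n * zchoose ((n : ℤ) - 1 - 2 * k) b

/-!
Since `∑ₘ C(n+m-j, n) tᵐ = tʲ / (1-t)ⁿ⁺¹`, the series of `opL n k` is, by linearity,
`4ᵏ ∑_b C(n-2k, b) tᵏ⁺ᵇ / (1-t)ⁿ⁺¹ = (4t)ᵏ (1+t)ⁿ⁻²ᵏ / (1-t)ⁿ⁺¹` as soon as `2k ≤ n`.
That bound holds for `k = lpk π` because two left peaks are never adjacent.
-/

open PowerSeries Finset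

lemma zchoose_natCast (a b : ℕ) : zchoose a b = (a.choose b : ℤ) := by
  unfold zchoose
  split_ifs with h
  · simp
  · rw [Nat.choose_eq_zero_of_lt (by omega), Nat.cast_zero]

lemma mk_zchoose_add_sub_mul_one_sub_pow (n j : ℕ) :
    (PowerSeries.mk fun m : ℕ => zchoose ((n : ℤ) + m - j) n : ℤ⟦X⟧) * (1 - X) ^ (n + 1)
      = X ^ j := by
  have hshift : (PowerSeries.mk fun m : ℕ => zchoose ((n : ℤ) + m - j) n : ℤ⟦X⟧)
      = X ^ j * PowerSeries.mk fun m : ℕ => ((n + m).choose n : ℤ) := by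
    ext m
    rw [coeff_mk, coeff_X_pow_mul']
    split_ifs with h
    · rw [coeff_mk, ← zchoose_natCast]
      congr 1
      push_cast
      omega
    · exact if_neg (by omega)
  rw [hshift, mul_assoc, mk_add_choose_mul_one_sub_pow_eq_one, mul_one]

lemma mk_opL_mul_one_sub_pow {n k : ℕ} (hk : 2 * k ≤ n) :
    (PowerSeries.mk fun m => opL n k m : ℤ⟦X⟧) * (1 - X) ^ (n + 1) =
      (4 * X) ^ k * (1 + X) ^ (n - 2 * k) := by
  set r := n - 2 * k
  have hr : (n : ℤ) - 2 * k = r := by omega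
  have hseries : (PowerSeries.mk fun m => opL n k m : ℤ⟦X⟧) = ∑ b ∈ range (n + 1),
      C (4 ^ k * (r.choose b : ℤ)) *
        PowerSeries.mk fun m : ℕ => zchoose ((n : ℤ) + m - (k + b : ℕ)) n := by
    ext m
    simp only [opL, hr, zchoose_natCast, coeff_mk, map_sum, coeff_C_mul, mul_sum, Nat.cast_add]
    exact sum_congr rfl fun b _ => by ring
  have hbinom : (4 * X : ℤ⟦X⟧) ^ k * (1 + X) ^ r
      = ∑ b ∈ range (n + 1), C (4 ^ k * (r.choose b : ℤ)) * X ^ (k + b) := by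
    have hvanish : ∀ b ∈ range (n + 1), b ∉ range (r + 1) →
        C (4 ^ k * (r.choose b : ℤ)) * (X : ℤ⟦X⟧) ^ (k + b) = 0 := by
      intro b _ hb
      rw [Nat.choose_eq_zero_of_lt (by simpa using hb)]
      simp
    rw [← sum_subset (range_subset_range.mpr (by omega)) hvanish, add_comm, add_pow, mul_sum]
    refine sum_congr rfl fun b _ => ?_
    simp only [map_mul, map_pow, map_natCast, map_ofNat, one_pow, mul_one, mul_pow, pow_add]
    ring
  rw [hseries, hbinom, sum_mul]
  exact sum_congr rfl fun b _ => by rw [mul_assoc, mk_zchoose_add_sub_mul_one_sub_pow]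

lemma two_mul_card_le_of_succ_notMem {S : Finset ℕ} {a b : ℕ} (hS : S ⊆ Ico a b)
    (hsucc : ∀ i ∈ S, i + 1 ∉ S) : 2 * #S ≤ b + 1 - a := by
  have hdisj : Disjoint S (S.image (· + 1)) := by
    simp only [disjoint_left, mem_image, not_exists, not_and]
    exact fun i hi j hj hji => hsucc j hj (hji ▸ hi)
  have hsub : S ∪ S.image (· + 1) ⊆ Ico a (b + 1) := by
    intro i hi
    simp only [mem_union, mem_image] at hi
    rcases hi with hi | ⟨j, hj, rfl⟩
    · have := mem_Ico.mp (hS hi); simp only [mem_Ico]; omega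
    · have := mem_Ico.mp (hS hj); simp only [mem_Ico]; omega
  calc 2 * #S = #(S ∪ S.image (· + 1)) := by
        rw [card_union_of_disjoint hdisj, card_image_of_injective _ (add_left_injective 1)]; ring
    _ ≤ b + 1 - a := by simpa using card_le_card hsub

lemma two_mul_lpk_le {n : ℕ} (π : Equiv.Perm (Fin n)) : 2 * lpk π ≤ n := by
  refine (two_mul_card_le_of_succ_notMem (a := 1) (b := n) ?_ ?_).trans_eq (by omega)
  · intro i hi
    simp only [mem_filter, mem_Icc, mem_Ico] at hi ⊢
    omega
  · intro i hi hsucc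
    simp only [mem_filter, Nat.add_sub_cancel] at hi hsucc
    omega

theorem stmt15 (n : ℕ) (π : Equiv.Perm (Fin n)) :
    (PowerSeries.mk fun m => opL n (lpk π) m) * (1 - PowerSeries.X) ^ (n + 1) =
      (4 * PowerSeries.X) ^ lpk π * (1 + PowerSeries.X) ^ (n - 2 * lpk π) :=
  mk_opL_mul_one_sub_pow (two_mul_lpk_le π)
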